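/- Under the stated hypotheses, T satisfies the Jacobi identity T(x,T(y,z)) + T(y,T(z,x)) + T(z,T(x,y)) = 0 for all x,y,z ∈ V, so that (V, T) is a real Lie algebra; moreover g is an invariant (ad-invariant) scalar product on this Lie algebra: g(T(x,y),z) = g(x,T(y,z)) for all x,y,z ∈ V. (This is the algebraic core of the theorem that a pseudo-riemannian manifold with a flat metric connection with closed torsion three-form is locally isometric to a Lie group with a bi-invariant metric.) -/
import Mathlib


variable {V : Type*} [AddCommGroup V] [Module ℝ V] [FiniteDimensional ℝ V]

/-- The cyclic Bianchi sum. -/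
private def Csum (g : V →ₗ[ℝ] V →ₗ[ℝ] ℝ) (S : V →ₗ[ℝ] V →ₗ[ℝ] V →ₗ[ℝ] V)
    (x y z w : V) : ℝ :=
  g (S x y z) w + g (S y z x) w + g (S z x y) w

/-- Under the hypotheses modelling a flat metric connection with closed torsion three-form,
`T` satisfies the Jacobi identity, so `(V, T)` is a real Lie algebra, and `g` is an
ad-invariant scalar product on it.  (This is the algebraic core of the theorem that a
pseudo-riemannian manifold with a flat metric connection with closed torsion three-form is
locally isometric to a Lie group with a bi-invariant metric.) -/
theorem torsion_jacobi_and_invariant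
    (g : V →ₗ[ℝ] V →ₗ[ℝ] ℝ)
    (hg_symm : ∀ x y : V, g x y = g y x)
    (hg_nondeg : ∀ x : V, (∀ y : V, g x y = 0) → x = 0)
    (T : V →ₗ[ℝ] V →ₗ[ℝ] V)
    (hT_alt : ∀ x y : V, T x y = - T y x)
    (hT_skew : ∀ x y z : V, g (T x y) z = - g (T x z) y)
    (S : V →ₗ[ℝ] V →ₗ[ℝ] V →ₗ[ℝ] V)
    (hS_alt : ∀ w x y : V, S w x y = - S w y x)
    (hS_skew : ∀ w x y z : V, g (S w x y) z = - g (S w x z) y)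
    (hdH : ∀ w x y z : V,
      g (S x y z) w - g (S y x z) w + g (S z x y) w - g (S w x y) z = 0)
    (hBianchi : ∀ w x y z : V,
      g (S x y z) w + g (S y z x) w + g (S z x y) w =
        -(1/2) * (g (T w x) (T y z) + g (T w y) (T z x) + g (T w z) (T x y))) :
    (∀ x y z : V, T x (T y z) + T y (T z x) + T z (T x y) = 0) ∧
    (∀ x y z : V, g (T x y) z = g x (T y z)) := by
  -- ad-invariance of g (needs only hT_alt, hT_skew, hg_symm)
  have hinv : ∀ x y z : V, g (T x y) z = g x (T y z) := by
    intro x y z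
    have h1 : g (T y z) x = - g (T y x) z := hT_skew y z x
    have h2 : g (T y x) z = - g (T x y) z := by rw [hT_alt y x]; simp
    rw [hg_symm x (T y z), h1, h2]; ring
  -- antisymmetry of S-contractions in the middle two slots
  have hAalt : ∀ w x y z : V, g (S w x y) z = - g (S w y x) z := by
    intro w x y z; rw [hS_alt w x y]; simp
  -- antisymmetry of g (T · ·) (T · ·)
  have hgT1 : ∀ a b c d : V, g (T a b) (T c d) = - g (T b a) (T c d) := by
    intro a b c d; rw [hT_alt a b]; simp
  have hgT2 : ∀ a b c d : V, g (T a b) (T c d) = - g (T a b) (T d c) := by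
    intro a b c d; rw [hT_alt c d]; simp
  -- Bianchi in Csum form
  have hB : ∀ w x y z : V, Csum g S x y z w =
      -(1/2) * (g (T w x) (T y z) + g (T w y) (T z x) + g (T w z) (T x y)) := by
    intro w x y z; exact hBianchi w x y z
  -- closedness rearranged: Csum x y z w = g (S w x y) z
  have hKey : ∀ w x y z : V, Csum g S x y z w = g (S w x y) z := by
    intro w x y z
    have h0 := hdH w x y z
    have h1 : g (S y x z) w = - g (S y z x) w := hAalt y x z w
    unfold Csum; linarith
  -- antisymmetry of Csum in slots 2,3
  have hC23 : ∀ x y z w : V, Csum g S x z y w = - Csum g S x y z w := by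
    intro x y z w
    have h1 := hAalt x z y w
    have h2 := hAalt z y x w
    have h3 := hAalt y x z w
    unfold Csum; linarith
  -- antisymmetry of Csum in slots 3,4
  have hC34 : ∀ x y z w : V, Csum g S x y w z = - Csum g S x y z w := by
    intro x y z w
    rw [hB z x y w, hB w x y z]
    have h1 : g (T z x) (T y w) = - g (T w y) (T z x) := by
      rw [hg_symm (T z x) (T y w), hgT1 y w z x]
    have h2 : g (T z y) (T w x) = - g (T w x) (T y z) := by
      rw [hg_symm (T z y) (T w x), hgT2 w x z y]
    have h3 : g (T z w) (T x y) = - g (T w z) (T x y) := hgT1 z w x y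
    linarith
  -- antisymmetry of Csum in slots 1,4
  have hC14 : ∀ x y z w : V, Csum g S w y z x = - Csum g S x y z w := by
    intro x y z w
    rw [hB x w y z, hB w x y z]
    have h1 : g (T x w) (T y z) = - g (T w x) (T y z) := hgT1 x w y z
    have h2 : g (T x y) (T z w) = - g (T w z) (T x y) := by
      rw [hg_symm (T x y) (T z w), hgT1 z w x y]
    have h3 : g (T x z) (T w y) = - g (T w y) (T z x) := by
      rw [hg_symm (T x z) (T w y), hgT2 w y x z]
    linarith
  -- antisymmetry in slots 1,2 (derived)
  have hC12 : ∀ x y z w : V, Csum g S y x z w = - Csum g S x y z w := by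
    intro x y z w
    have e1 : Csum g S y x z w = - Csum g S w x z y := hC14 w x z y
    have e2 : Csum g S w x z y = - Csum g S w z x y := hC23 w z x y
    have e3 : Csum g S w z x y = - Csum g S w z y x := hC34 w z y x
    have e4 : Csum g S w z y x = - Csum g S x z y w := hC14 x z y w
    have e5 : Csum g S x z y w = - Csum g S x y z w := hC23 x y z w
    linarith
  -- the cyclic sum vanishes
  have hCzero : ∀ x y z w : V, Csum g S x y z w = 0 := by
    intro x y z w
    -- Csum x y z w = Csum y z w x + Csum z x w y + Csum x y w z
    have hA1 : g (S x y z) w = Csum g S y z w x := (hKey x y z w).symm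
    have hA2 : g (S y z x) w = Csum g S z x w y := (hKey y z x w).symm
    have hA3 : g (S z x y) w = Csum g S x y w z := (hKey z x y w).symm
    have hsum : Csum g S x y z w =
        Csum g S y z w x + Csum g S z x w y + Csum g S x y w z := by
      unfold Csum at hA1 hA2 hA3 ⊢; linarith
    -- each term equals - Csum x y z w
    have t3 : Csum g S x y w z = - Csum g S x y z w := hC34 x y z w
    have t1 : Csum g S y z w x = - Csum g S x y z w := by
      have e1 : Csum g S y z w x = - Csum g S x z w y := hC14 x z w y
      have e2 : Csum g S x z w y = - Csum g S x z y w := hC34 x z y w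
      have e3 : Csum g S x z y w = - Csum g S x y z w := hC23 x y z w
      linarith
    have t2 : Csum g S z x w y = - Csum g S x y z w := by
      have e1 : Csum g S z x w y = - Csum g S x z w y := hC12 x z w y
      have e2 : Csum g S x z w y = - Csum g S x z y w := hC34 x z y w
      have e3 : Csum g S x z y w = - Csum g S x y z w := hC23 x y z w
      linarith
    linarith
  -- hence the quadratic torsion expression vanishes
  have hJ : ∀ w x y z : V,
      g (T w x) (T y z) + g (T w y) (T z x) + g (T w z) (T x y) = 0 := by
    intro w x y z
    have h1 := hB w x y z
    have h2 := hCzero x y z w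
    linarith
  refine ⟨?_, fun x y z => hinv x y z⟩
  intro x y z
  apply hg_nondeg
  intro w
  have e1 : g (T x (T y z)) w = g (T w x) (T y z) := by
    rw [hg_symm, hinv w x (T y z)]
  have e2 : g (T y (T z x)) w = g (T w y) (T z x) := by
    rw [hg_symm, hinv w y (T z x)]
  have e3 : g (T z (T x y)) w = g (T w z) (T x y) := by
    rw [hg_symm, hinv w z (T x y)]
  have := hJ w x y z
  simp only [map_add, LinearMap.add_apply]
  linarith
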